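/- arXiv:2010.10040 — 5 statements merged into one kernel-verified Lean document; each statement's English description precedes it below -/
import Mathlib

section
/- Let f : ℝⁿ → ℝⁿ be a Lipschitz map that maps each face of the unit cube [0,1]ⁿ into itself (i.e., for each i, f maps {x ∈ [0,1]ⁿ : x_i = 0} into itself and {x ∈ [0,1]ⁿ : x_i = 1} into itself). Then f restricted to [0,1]ⁿ is surjective onto [0,1]ⁿ. -/
/-!
Fix `y` in the cube with every `y i < 1` and a grid size `m`, and label each point `v` of the
grid `{0, …, m}ⁿ` by the least `i` with `f (v / m) i ≤ y i` (or by `n` if there is none). The face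
conditions make this a Sperner labelling of the Kuhn triangulation of the grid: on the face
`x_i = 0` every label is at most `i`, and on the face `x_i = 1` no label equals `i`. Sperner's
lemma, proved by counting doors modulo two and inducting on the dimension (interior doors are
paired off by passing to the neighbouring simplex, boundary doors are the fully labelled simplices
of the face `x_{n-1} = 0`), yields a fully labelled simplex. Its vertices show that the
`K`-Lipschitz map `f` comes within `K / m` of `y`. As the image of the cube is compact and such
`y` are dense in the cube, the image contains the cube.
-/

open Finset

section DoorParity

variable {α : Type*} [DecidableEq α] {S : Finset α} {ℓ : α → ℕ} {d : ℕ}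

lemma filter_doors_eq_singleton (hS : #S = d + 1) (hfull : range (d + 1) ⊆ S.image ℓ) :
    ∃ k₀, {k ∈ S | range d ⊆ (S.erase k).image ℓ} = {k₀} := by
  have himage : S.image ℓ = range (d + 1) :=
    (eq_of_subset_of_card_le hfull
      (by simpa [hS] using card_image_le (s := S) (f := ℓ))).symm
  have hinj : Set.InjOn ℓ S := injOn_of_card_image_eq (by rw [himage, hS, card_range])
  obtain ⟨k₀, hk₀S, hk₀⟩ : ∃ k₀ ∈ S, ℓ k₀ = d := mem_image.1 (himage ▸ self_mem_range_succ d)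
  refine ⟨k₀, ext fun k => ⟨fun hk => ?_, fun hk => ?_⟩⟩
  · obtain ⟨hkS, hdoor⟩ := mem_filter.1 hk
    by_contra hne
    have hlt : ℓ k < d := by
      have := mem_range.1 (himage ▸ mem_image_of_mem ℓ hkS)
      have : ℓ k ≠ d := fun h =>
        hne (mem_singleton.2 (hinj hkS hk₀S (h.trans hk₀.symm)))
      omega
    obtain ⟨j, hj, hjk⟩ := mem_image.1 (hdoor (mem_range.2 hlt))
    exact (ne_of_mem_erase hj) (hinj (mem_of_mem_erase hj) hkS hjk)
  · rw [mem_singleton.1 hk]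
    refine mem_filter.2 ⟨hk₀S, fun c hc => ?_⟩
    obtain ⟨j, hjS, rfl⟩ := mem_image.1 (hfull (range_subset_range.2 d.le_succ hc))
    refine mem_image_of_mem ℓ (mem_erase.2 ⟨?_, hjS⟩)
    rintro rfl
    simp [hk₀] at hc

lemma filter_doors_eq_pair (hS : #S = d + 1) (hℓ : ∀ k ∈ S, ℓ k ≤ d)
    (hfull : ¬ range (d + 1) ⊆ S.image ℓ) (hcover : range d ⊆ S.image ℓ) :
    ∃ k₁ k₂, k₁ ≠ k₂ ∧ {k ∈ S | range d ⊆ (S.erase k).image ℓ} = {k₁, k₂} := by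
  have himage : S.image ℓ ⊆ range d := by
    rintro _ hc
    obtain ⟨k, hkS, rfl⟩ := mem_image.1 hc
    refine mem_range.2 (lt_of_le_of_ne (hℓ k hkS) fun hd => hfull fun c hc' => ?_)
    rcases Nat.lt_succ_iff_lt_or_eq.1 (mem_range.1 hc') with h | h
    · exact hcover (mem_range.2 h)
    · exact h ▸ hd ▸ hc
  obtain ⟨k₁, hk₁, k₂, hk₂, hne, heq⟩ := exists_ne_map_eq_of_card_lt_of_maps_to
    (show #(range d) < #S by simp [hS]) fun k hk => himage (mem_image_of_mem ℓ hk)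
  refine ⟨k₁, k₂, hne, ext fun k => ⟨fun hk => ?_, fun hk => ?_⟩⟩
  · obtain ⟨hkS, hdoor⟩ := mem_filter.1 hk
    by_contra hk'
    simp only [mem_insert, mem_singleton, not_or] at hk'
    have hinj : Set.InjOn ℓ (S.erase k) := by
      refine injOn_of_card_image_eq ?_
      rw [le_antisymm ((image_subset_image (erase_subset k S)).trans himage) hdoor,
        card_erase_of_mem hkS, hS, card_range, Nat.add_sub_cancel]
    exact hne (hinj (mem_erase.2 ⟨Ne.symm hk'.1, hk₁⟩) (mem_erase.2 ⟨Ne.symm hk'.2, hk₂⟩)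
      heq)
  · have hkS : k ∈ S := by rcases mem_insert.1 hk with rfl | hk <;> simp_all
    refine mem_filter.2 ⟨hkS, fun c hc => ?_⟩
    obtain ⟨j, hjS, rfl⟩ := mem_image.1 (hcover hc)
    by_cases hjk : j = k
    · subst hjk
      rcases mem_insert.1 hk with rfl | hk
      · exact mem_image.2 ⟨k₂, mem_erase.2 ⟨hne.symm, hk₂⟩, heq.symm⟩
      · rw [mem_singleton.1 hk]
        exact mem_image.2 ⟨k₁, mem_erase.2 ⟨hne, hk₁⟩, heq⟩
    · exact mem_image_of_mem ℓ (mem_erase.2 ⟨hjk, hjS⟩)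

lemma filter_doors_eq_empty (hcover : ¬ range d ⊆ S.image ℓ) :
    {k ∈ S | range d ⊆ (S.erase k).image ℓ} = ∅ :=
  filter_eq_empty_iff.2 fun k _ hdoor =>
    hcover (hdoor.trans (image_subset_image (erase_subset k S)))

/-- Read `S` as the vertices of a `d`-simplex labelled by `ℓ`, and call `k ∈ S` a door if the
facet opposite to `k` carries all the labels `0, …, d - 1`: a simplex has an odd number of doors
iff it is fully labelled. -/
lemma card_doors_mod_two (hS : #S = d + 1) (hℓ : ∀ k ∈ S, ℓ k ≤ d) :
    (#{k ∈ S | range d ⊆ (S.erase k).image ℓ} : ZMod 2) =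
      if range (d + 1) ⊆ S.image ℓ then 1 else 0 := by
  by_cases hfull : range (d + 1) ⊆ S.image ℓ
  · obtain ⟨k₀, h⟩ := filter_doors_eq_singleton hS hfull
    simp [h, hfull]
  by_cases hcover : range d ⊆ S.image ℓ
  · obtain ⟨k₁, k₂, hne, h⟩ := filter_doors_eq_pair hS hℓ hfull hcover
    rw [h, card_pair hne, if_neg hfull]
    rfl
  · simp [filter_doors_eq_empty hcover, hfull]

end DoorParity

namespace Kuhn

section Vertex

variable {N : ℕ}

def vertex (z : Fin N → ℕ) (σ : Equiv.Perm (Fin N)) (k : ℕ) : Fin N → ℕ :=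
  fun i => z i + if (σ i : ℕ) < k then 1 else 0

/-- The Kuhn triangulation of the grid cube `[0, m]^N`: the simplex `(z, σ)` has the vertices
`vertex z σ 0 = z, …, vertex z σ N = z + 1`, raising the coordinates one at a time in the order
given by `σ`. -/
def simplices (N m : ℕ) : Finset ((Fin N → ℕ) × Equiv.Perm (Fin N)) :=
  Fintype.piFinset (fun _ => range m) ×ˢ univ

def IsFullyLabelled (L : (Fin N → ℕ) → ℕ) (p : (Fin N → ℕ) × Equiv.Perm (Fin N)) : Prop :=
  range (N + 1) ⊆ (range (N + 1)).image fun k => L (vertex p.1 p.2 k)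

/-- The facet of `p` opposite to its `k`-th vertex carries all the labels `0, …, N - 1`. -/
def IsDoor (L : (Fin N → ℕ) → ℕ) (p : (Fin N → ℕ) × Equiv.Perm (Fin N)) (k : ℕ) : Prop :=
  range N ⊆ ((range (N + 1)).erase k).image fun j => L (vertex p.1 p.2 j)

instance (L : (Fin N → ℕ) → ℕ) : DecidablePred (IsFullyLabelled L) := fun _ => by
  unfold IsFullyLabelled; infer_instance

instance (L : (Fin N → ℕ) → ℕ) (p : (Fin N → ℕ) × Equiv.Perm (Fin N)) :
    DecidablePred (IsDoor L p) := fun _ => by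
  unfold IsDoor; infer_instance

lemma lt_of_mem_simplices {m : ℕ} {p : (Fin N → ℕ) × Equiv.Perm (Fin N)}
    (hp : p ∈ simplices N m) (i : Fin N) : p.1 i < m := by
  simpa using Fintype.mem_piFinset.1 (mem_product.1 hp).1 i

lemma mk_mem_simplices {m : ℕ} {z : Fin N → ℕ} {σ : Equiv.Perm (Fin N)} :
    (z, σ) ∈ simplices N m ↔ ∀ i, z i < m := by
  simp [simplices]

lemma vertex_le {m : ℕ} {p : (Fin N → ℕ) × Equiv.Perm (Fin N)} (hp : p ∈ simplices N m)
    (k : ℕ) (i : Fin N) : vertex p.1 p.2 k i ≤ m := by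
  have := lt_of_mem_simplices hp i
  unfold vertex
  split <;> omega

lemma vertex_swap (z : Fin N → ℕ) (σ : Equiv.Perm (Fin N)) {a b : Fin N} {k j : ℕ}
    (ha : (a : ℕ) + 1 = k) (hb : (b : ℕ) = k) (hj : j ≠ k) :
    vertex z (Equiv.swap a b * σ) j = vertex z σ j := by
  funext i
  simp only [vertex, Equiv.Perm.mul_apply]
  rcases eq_or_ne (σ i) a with h | h
  · simp only [h, Equiv.swap_apply_left]
    split_ifs <;> omega
  rcases eq_or_ne (σ i) b with h' | h'
  · simp only [h', Equiv.swap_apply_right]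
    split_ifs <;> omega
  · simp only [Equiv.swap_apply_of_ne_of_ne h h']

lemma isDoor_swap_iff (L : (Fin N → ℕ) → ℕ) (z : Fin N → ℕ) (σ : Equiv.Perm (Fin N))
    {a b : Fin N} {k : ℕ} (ha : (a : ℕ) + 1 = k) (hb : (b : ℕ) = k) :
    IsDoor L (z, Equiv.swap a b * σ) k ↔ IsDoor L (z, σ) k := by
  unfold IsDoor
  rw [image_congr fun j hj => congrArg L (vertex_swap z σ ha hb (ne_of_mem_erase hj))]

end Vertex

section Pivot

variable {n : ℕ}

def raise (z : Fin (n + 1) → ℕ) (σ : Equiv.Perm (Fin (n + 1))) : Fin (n + 1) → ℕ :=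
  fun i => z i + if σ i = 0 then 1 else 0

def lower (z : Fin (n + 1) → ℕ) (σ : Equiv.Perm (Fin (n + 1))) : Fin (n + 1) → ℕ :=
  fun i => z i - if σ i = Fin.last n then 1 else 0

lemma finRotate_symm_zero : (finRotate (n + 1)).symm 0 = Fin.last n :=
  (Equiv.symm_apply_eq _).2 finRotate_last.symm

lemma vertex_raise (z : Fin (n + 1) → ℕ) (σ : Equiv.Perm (Fin (n + 1))) {j : ℕ} (hj : j ≤ n) :
    vertex (raise z σ) ((finRotate (n + 1)).symm * σ) j = vertex z σ (j + 1) := by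
  funext i
  simp only [vertex, raise, Equiv.Perm.mul_apply]
  by_cases h : σ i = 0
  · simp only [h, finRotate_symm_apply, zero_sub, Fin.coe_neg_one, Fin.val_zero]
    split_ifs <;> omega
  · have h' : (σ i : ℕ) ≠ 0 := Fin.val_ne_zero_iff.2 h
    simp only [h, ↓reduceIte, coe_finRotate_symm_of_ne_zero h]
    split_ifs <;> omega

lemma vertex_lower (z : Fin (n + 1) → ℕ) (σ : Equiv.Perm (Fin (n + 1)))
    (hz : 1 ≤ z (σ.symm (Fin.last n))) {j : ℕ} (hj₁ : 1 ≤ j) (hj : j ≤ n + 1) :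
    vertex (lower z σ) (finRotate (n + 1) * σ) j = vertex z σ (j - 1) := by
  funext i
  simp only [vertex, lower, Equiv.Perm.mul_apply]
  by_cases h : σ i = Fin.last n
  · have : 1 ≤ z i := by rwa [← σ.symm_apply_eq.2 h.symm]
    simp only [h, finRotate_last, Fin.val_last, Fin.val_zero]
    split_ifs <;> omega
  · have := Fin.val_lt_last h
    simp only [h, ↓reduceIte, coe_finRotate_of_ne_last h]
    split_ifs <;> omega

lemma isDoor_raise_iff (L : (Fin (n + 1) → ℕ) → ℕ) (z : Fin (n + 1) → ℕ)
    (σ : Equiv.Perm (Fin (n + 1))) :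
    IsDoor L (raise z σ, (finRotate (n + 1)).symm * σ) (n + 1) ↔ IsDoor L (z, σ) 0 := by
  have hsucc : (range (n + 1 + 1)).erase 0 = (range (n + 1)).image (· + 1) := by
    ext j; simp only [mem_erase, mem_range, mem_image]
    exact ⟨fun h => ⟨j - 1, by omega, by omega⟩, by rintro ⟨j, hj, rfl⟩; omega⟩
  unfold IsDoor
  rw [range_add_one (n := n + 1), erase_insert notMem_range_self, ← range_add_one, hsucc,
    image_image]
  rw [image_congr fun j hj =>
    congrArg L (vertex_raise z σ (Nat.lt_succ_iff.1 (mem_range.1 hj)))]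
  rfl

lemma isDoor_lower_iff (L : (Fin (n + 1) → ℕ) → ℕ) (z : Fin (n + 1) → ℕ)
    (σ : Equiv.Perm (Fin (n + 1))) (hz : 1 ≤ z (σ.symm (Fin.last n))) :
    IsDoor L (lower z σ, finRotate (n + 1) * σ) 0 ↔ IsDoor L (z, σ) (n + 1) := by
  have hpred : ((range (n + 1 + 1)).erase 0).image (· - 1) = range (n + 1) := by
    ext j; simp only [mem_erase, mem_range, mem_image]
    exact ⟨by rintro ⟨j, hj, rfl⟩; omega, fun h => ⟨j + 1, by omega, by omega⟩⟩
  unfold IsDoor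
  rw [image_congr fun j hj => by
    obtain ⟨hj₀, hj⟩ := mem_erase.1 hj
    exact congrArg L (vertex_lower z σ hz (Nat.one_le_iff_ne_zero.2 hj₀)
      (Nat.lt_succ_iff.1 (mem_range.1 hj)))]
  rw [range_add_one (n := n + 1), erase_insert notMem_range_self, ← range_add_one, ← hpred,
    image_image]
  rfl

/-- The neighbouring simplex across the facet of `a.1` opposite to its vertex `a.2`, together with
the index of its own vertex opposite to that facet. -/
def pivot (a : ((Fin (n + 1) → ℕ) × Equiv.Perm (Fin (n + 1))) × ℕ) :
    ((Fin (n + 1) → ℕ) × Equiv.Perm (Fin (n + 1))) × ℕ :=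
  if a.2 = 0 then ((raise a.1.1 a.1.2, (finRotate (n + 1)).symm * a.1.2), n + 1)
  else if a.2 = n + 1 then ((lower a.1.1 a.1.2, finRotate (n + 1) * a.1.2), 0)
  else
    ((a.1.1, Equiv.swap (Fin.ofNat (n + 1) (a.2 - 1)) (Fin.ofNat (n + 1) a.2) * a.1.2), a.2)

/-- The facet of `a.1` opposite to its vertex `a.2` lies in the boundary of the grid
`[0, m]ⁿ⁺¹`; the facets opposite to the other vertices never do. -/
def IsBoundary (m : ℕ) (a : ((Fin (n + 1) → ℕ) × Equiv.Perm (Fin (n + 1))) × ℕ) : Prop :=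
  (a.2 = 0 ∧ a.1.1 (a.1.2.symm 0) + 1 = m) ∨
    (a.2 = n + 1 ∧ a.1.1 (a.1.2.symm (Fin.last n)) = 0)

instance (m : ℕ) : DecidablePred (IsBoundary (n := n) m) := fun _ => by
  unfold IsBoundary; infer_instance

def doors (L : (Fin (n + 1) → ℕ) → ℕ) (m : ℕ) :
    Finset (((Fin (n + 1) → ℕ) × Equiv.Perm (Fin (n + 1))) × ℕ) :=
  {a ∈ simplices (n + 1) m ×ˢ range (n + 2) | IsDoor L a.1 a.2}

lemma mem_doors {L : (Fin (n + 1) → ℕ) → ℕ} {m : ℕ}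
    {a : ((Fin (n + 1) → ℕ) × Equiv.Perm (Fin (n + 1))) × ℕ} :
    a ∈ doors L m ↔ a.1 ∈ simplices (n + 1) m ∧ a.2 ≤ n + 1 ∧ IsDoor L a.1 a.2 := by
  simp [doors, Nat.lt_succ_iff, and_assoc]

lemma pivot_zero (z : Fin (n + 1) → ℕ) (σ : Equiv.Perm (Fin (n + 1))) :
    pivot ((z, σ), 0) = ((raise z σ, (finRotate (n + 1)).symm * σ), n + 1) := rfl

lemma pivot_last (z : Fin (n + 1) → ℕ) (σ : Equiv.Perm (Fin (n + 1))) :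
    pivot ((z, σ), n + 1) = ((lower z σ, finRotate (n + 1) * σ), 0) := by
  simp [pivot]

lemma pivot_of_pos_of_le {k : ℕ} (hk₀ : 0 < k) (hk : k ≤ n) :
    ∃ a b : Fin (n + 1), (a : ℕ) + 1 = k ∧ (b : ℕ) = k ∧
      ∀ z σ, pivot ((z, σ), k) = ((z, Equiv.swap a b * σ), k) := by
  refine ⟨Fin.ofNat (n + 1) (k - 1), Fin.ofNat (n + 1) k, ?_, ?_, fun z σ => ?_⟩
  · rw [Fin.val_ofNat, Nat.mod_eq_of_lt (by omega)]; omega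
  · rw [Fin.val_ofNat, Nat.mod_eq_of_lt (by omega)]
  · simp [pivot, hk₀.ne', show k ≠ n + 1 by omega]

lemma lower_raise (z : Fin (n + 1) → ℕ) (σ : Equiv.Perm (Fin (n + 1))) :
    lower (raise z σ) ((finRotate (n + 1)).symm * σ) = z := by
  funext i
  simp only [lower, raise, Equiv.Perm.mul_apply, Equiv.symm_apply_eq, finRotate_last]
  split_ifs <;> omega

lemma raise_lower (z : Fin (n + 1) → ℕ) (σ : Equiv.Perm (Fin (n + 1)))
    (hz : 1 ≤ z (σ.symm (Fin.last n))) :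
    raise (lower z σ) (finRotate (n + 1) * σ) = z := by
  funext i
  simp only [lower, raise, Equiv.Perm.mul_apply, ← finRotate_last, EmbeddingLike.apply_eq_iff_eq]
  split_ifs with h
  · rw [σ.symm_apply_eq.2 h.symm] at hz
    omega
  · omega

variable {L : (Fin (n + 1) → ℕ) → ℕ} {m : ℕ}
  {a : ((Fin (n + 1) → ℕ) × Equiv.Perm (Fin (n + 1))) × ℕ}

lemma pivot_mem_doors (ha : a ∈ doors L m) (hb : ¬ IsBoundary m a) :
    pivot a ∈ doors L m ∧ ¬ IsBoundary m (pivot a) := by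
  obtain ⟨⟨z, σ⟩, k⟩ := a
  obtain ⟨hzσ, hk, hdoor⟩ := mem_doors.1 ha
  have hz : ∀ i, z i < m := mk_mem_simplices.1 hzσ
  simp only [IsBoundary, not_or, not_and] at hb
  rcases (show k = 0 ∨ k = n + 1 ∨ (0 < k ∧ k ≤ n) by omega) with rfl | rfl | ⟨hk₀, hkn⟩
  · have htop : z (σ.symm 0) + 1 < m := lt_of_le_of_ne (hz _) (hb.1 rfl)
    rw [pivot_zero]
    refine ⟨mem_doors.2 ⟨mk_mem_simplices.2 fun i => ?_, le_rfl,
      (isDoor_raise_iff L z σ).2 hdoor⟩, ?_⟩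
    · simp only [raise]
      split_ifs with h
      · rwa [← σ.symm_apply_eq.2 h.symm]
      · simpa using hz i
    · simp [IsBoundary, raise, Equiv.Perm.mul_def]
  · have hbot : 1 ≤ z (σ.symm (Fin.last n)) := Nat.one_le_iff_ne_zero.2 (hb.2 rfl)
    rw [pivot_last]
    refine ⟨mem_doors.2 ⟨mk_mem_simplices.2 fun i => ?_, Nat.zero_le _,
      (isDoor_lower_iff L z σ hbot).2 hdoor⟩, ?_⟩
    · exact Nat.lt_of_le_of_lt (Nat.sub_le _ _) (hz i)
    · have := hz (σ.symm (Fin.last n))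
      simp [IsBoundary, lower, Equiv.Perm.mul_def, -finRotate_symm_apply, finRotate_symm_zero]
      omega
  · obtain ⟨a, b, ha, hb, hpivot⟩ := pivot_of_pos_of_le hk₀ hkn
    rw [hpivot]
    refine ⟨mem_doors.2 ⟨mk_mem_simplices.2 hz, hk, (isDoor_swap_iff L z σ ha hb).2 hdoor⟩,
      ?_⟩
    simp only [IsBoundary]
    omega

lemma pivot_pivot (ha : a ∈ doors L m) (hb : ¬ IsBoundary m a) : pivot (pivot a) = a := by
  obtain ⟨⟨z, σ⟩, k⟩ := a
  have hk := (mem_doors.1 ha).2.1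
  simp only [IsBoundary, not_or, not_and] at hb
  rcases (show k = 0 ∨ k = n + 1 ∨ (0 < k ∧ k ≤ n) by omega) with rfl | rfl | ⟨hk₀, hkn⟩
  · rw [pivot_zero, pivot_last, lower_raise, ← Equiv.Perm.inv_def, mul_inv_cancel_left]
  · rw [pivot_last, pivot_zero, raise_lower z σ (Nat.one_le_iff_ne_zero.2 (hb.2 rfl)),
      ← Equiv.Perm.inv_def, inv_mul_cancel_left]
  · obtain ⟨a, b, -, -, hpivot⟩ := pivot_of_pos_of_le hk₀ hkn
    rw [hpivot, hpivot, Equiv.swap_mul_self_mul]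

lemma pivot_ne_self (ha : a ∈ doors L m) : pivot a ≠ a := by
  obtain ⟨⟨z, σ⟩, k⟩ := a
  have hk := (mem_doors.1 ha).2.1
  rcases (show k = 0 ∨ k = n + 1 ∨ (0 < k ∧ k ≤ n) by omega) with rfl | rfl | ⟨hk₀, hkn⟩
  · simp [pivot_zero]
  · simp [pivot_last]
  · obtain ⟨a, b, ha, hb, hpivot⟩ := pivot_of_pos_of_le hk₀ hkn
    have hab : a ≠ b := fun h => by rw [h] at ha; omega
    simpa [hpivot, Equiv.swap_eq_one_iff] using hab

end Pivot

section Restriction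

variable {n : ℕ}

def snocPerm (σ : Equiv.Perm (Fin n)) : Equiv.Perm (Fin (n + 1)) :=
  Equiv.permCongr finSuccEquivLast.symm σ.optionCongr

@[simp] lemma snocPerm_castSucc (σ : Equiv.Perm (Fin n)) (i : Fin n) :
    snocPerm σ i.castSucc = (σ i).castSucc := by
  simp [snocPerm, Equiv.permCongr_apply]

@[simp] lemma snocPerm_last (σ : Equiv.Perm (Fin n)) :
    snocPerm σ (Fin.last n) = Fin.last n := by
  simp [snocPerm, Equiv.permCongr_apply]

@[simp] lemma snocPerm_symm_last (σ : Equiv.Perm (Fin n)) :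
    (snocPerm σ).symm (Fin.last n) = Fin.last n := by
  rw [Equiv.symm_apply_eq, snocPerm_last]

lemma snocPerm_injective : Function.Injective (snocPerm (n := n)) :=
  (Equiv.permCongr _).injective.comp Equiv.optionCongr_injective

lemma exists_snocPerm_eq {σ : Equiv.Perm (Fin (n + 1))} (hσ : σ (Fin.last n) = Fin.last n) :
    ∃ τ, snocPerm τ = σ := by
  set q := Equiv.permCongr finSuccEquivLast σ
  have hq : q none = none := by simp [q, Equiv.permCongr_apply, hσ]
  refine ⟨Equiv.removeNone q, ?_⟩
  rw [snocPerm, map_equiv_removeNone, hq, Equiv.swap_self, ← Equiv.Perm.one_def, one_mul]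
  ext i
  simp [q, Equiv.permCongr_apply]

lemma vertex_snoc (z : Fin n → ℕ) (σ : Equiv.Perm (Fin n)) {j : ℕ} (hj : j ≤ n) :
    vertex (Fin.snoc z 0) (snocPerm σ) j = Fin.snoc (vertex z σ j) 0 := by
  funext i
  refine Fin.lastCases ?_ (fun i => ?_) i
  · simp [vertex]
    omega
  · simp [vertex]

lemma isDoor_snoc_iff (L : (Fin (n + 1) → ℕ) → ℕ) (z : Fin n → ℕ) (σ : Equiv.Perm (Fin n)) :
    IsDoor L (Fin.snoc z 0, snocPerm σ) (n + 1) ↔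
      IsFullyLabelled (fun v => L (Fin.snoc v 0)) (z, σ) := by
  unfold IsDoor IsFullyLabelled
  rw [range_add_one (n := n + 1), erase_insert notMem_range_self,
    image_congr fun j hj =>
      congrArg L (vertex_snoc z σ (Nat.lt_succ_iff.1 (mem_range.1 hj)))]

end Restriction

section Sperner

structure IsSpernerLabelling {N : ℕ} (m : ℕ) (L : (Fin N → ℕ) → ℕ) : Prop where
  le_dim : ∀ v, (∀ i, v i ≤ m) → L v ≤ N
  le_of_eq_zero : ∀ v, (∀ i, v i ≤ m) → ∀ i : Fin N, v i = 0 → L v ≤ i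
  ne_of_eq_top : ∀ v, (∀ i, v i ≤ m) → ∀ i : Fin N, v i = m → L v ≠ i

variable {n m : ℕ} {L : (Fin (n + 1) → ℕ) → ℕ}

lemma IsSpernerLabelling.snoc (hL : IsSpernerLabelling m L) :
    IsSpernerLabelling m fun v : Fin n → ℕ => L (Fin.snoc v 0) := by
  have hsnoc : ∀ v : Fin n → ℕ, (∀ i, v i ≤ m) → ∀ i, (Fin.snoc v 0 : Fin (n + 1) → ℕ) i ≤ m :=
    fun v hv i => Fin.lastCases (by simp) (fun i => by simpa using hv i) i
  refine ⟨fun v hv => ?_, fun v hv i hi => ?_, fun v hv i hi => ?_⟩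
  · simpa using hL.le_of_eq_zero _ (hsnoc v hv) (Fin.last n) (by simp)
  · simpa using hL.le_of_eq_zero _ (hsnoc v hv) i.castSucc (by simpa using hi)
  · simpa using hL.ne_of_eq_top _ (hsnoc v hv) i.castSucc (by simpa using hi)

lemma card_fullyLabelled_eq_card_doors (hL : IsSpernerLabelling m L) :
    (#{p ∈ simplices (n + 1) m | IsFullyLabelled L p} : ZMod 2) = #(doors L m) := by
  have hdoors :
      #(doors L m) = ∑ p ∈ simplices (n + 1) m, #{k ∈ range (n + 2) | IsDoor L p k} := by
    simp only [doors, card_filter, sum_product]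
  rw [hdoors, Nat.cast_sum, ← sum_boole]
  exact sum_congr rfl fun p hp =>
    (card_doors_mod_two (by simp) fun k _ => hL.le_dim _ (vertex_le hp k)).symm

lemma card_interior_doors : (#{a ∈ doors L m | ¬ IsBoundary m a} : ZMod 2) = 0 := by
  rw [card_eq_sum_ones, Nat.cast_sum, Nat.cast_one]
  refine sum_involution (fun a _ => pivot a) (fun _ _ => by decide) (fun a ha _ => ?_)
    (fun a ha => ?_) (fun a ha => ?_) <;> obtain ⟨ha, hb⟩ := mem_filter.1 ha
  · exact pivot_ne_self ha
  · exact mem_filter.2 (pivot_mem_doors ha hb)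
  · exact pivot_pivot ha hb

lemma not_isDoor_zero (hL : IsSpernerLabelling m L) {z : Fin (n + 1) → ℕ}
    {σ : Equiv.Perm (Fin (n + 1))} (hp : (z, σ) ∈ simplices (n + 1) m)
    (htop : z (σ.symm 0) + 1 = m) : ¬ IsDoor L (z, σ) 0 := by
  intro hdoor
  obtain ⟨j, hj, hLj⟩ := mem_image.1 (hdoor (mem_range.2 (σ.symm 0).is_lt))
  refine hL.ne_of_eq_top _ (vertex_le hp j) (σ.symm 0) ?_ hLj
  simp only [vertex, Equiv.apply_symm_apply, Fin.val_zero]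
  rw [if_pos (Nat.pos_of_ne_zero (ne_of_mem_erase hj)), htop]

/-- The door carries the label `n`, while on the face `x_i = 0` all labels are at most `i`. -/
lemma apply_last_of_isDoor (hL : IsSpernerLabelling m L) {z : Fin (n + 1) → ℕ}
    {σ : Equiv.Perm (Fin (n + 1))} (hp : (z, σ) ∈ simplices (n + 1) m)
    (hbot : z (σ.symm (Fin.last n)) = 0) (hdoor : IsDoor L (z, σ) (n + 1)) :
    σ (Fin.last n) = Fin.last n := by
  obtain ⟨j, hj, hLj⟩ := mem_image.1 (hdoor (self_mem_range_succ n))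
  obtain ⟨hj, hj'⟩ := mem_erase.1 hj
  have hle := hL.le_of_eq_zero _ (vertex_le hp j) (σ.symm (Fin.last n)) (by
    simp only [vertex, Equiv.apply_symm_apply, Fin.val_last, hbot]
    rw [if_neg (by simp at hj'; omega)])
  rw [hLj] at hle
  have hlast : σ.symm (Fin.last n) = Fin.last n :=
    Fin.ext (le_antisymm (Fin.le_last _) (by simpa using hle))
  exact (σ.symm_apply_eq.1 hlast).symm

lemma card_boundary_doors (hm : 0 < m) (hL : IsSpernerLabelling m L) :
    #{a ∈ doors L m | IsBoundary m a} =
      #{p ∈ simplices n m | IsFullyLabelled (fun v => L (Fin.snoc v 0)) p} := by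
  symm
  refine card_bij (fun p _ => ((Fin.snoc p.1 0, snocPerm p.2), n + 1)) (fun p hp => ?_)
    (fun p _ q _ h => ?_) (fun a ha => ?_)
  · obtain ⟨hp, hfull⟩ := mem_filter.1 hp
    refine mem_filter.2 ⟨mem_doors.2 ⟨mk_mem_simplices.2 fun i => ?_, le_rfl,
      (isDoor_snoc_iff L p.1 p.2).2 hfull⟩, Or.inr ⟨rfl, by simp⟩⟩
    exact Fin.lastCases (by simpa using hm) (fun i => by simpa using lt_of_mem_simplices hp i) i
  · simp only [Prod.mk.injEq, Fin.snoc_inj, and_true] at h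
    exact Prod.ext h.1 (snocPerm_injective h.2)
  · obtain ⟨ha, hb⟩ := mem_filter.1 ha
    obtain ⟨⟨z, σ⟩, k⟩ := a
    obtain ⟨hp, -, hdoor⟩ := mem_doors.1 ha
    rcases hb with ⟨rfl, htop⟩ | ⟨rfl, hbot⟩
    · exact absurd hdoor (not_isDoor_zero hL hp htop)
    obtain ⟨τ, rfl⟩ := exists_snocPerm_eq (apply_last_of_isDoor hL hp hbot hdoor)
    have hz : Fin.snoc (Fin.init z) 0 = z := by
      rw [← show z (Fin.last n) = 0 by simpa using hbot, Fin.snoc_init_self]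
    refine ⟨(Fin.init z, τ), mem_filter.2 ⟨mk_mem_simplices.2 fun i => ?_, ?_⟩, by rw [hz]⟩
    · exact lt_of_mem_simplices hp i.castSucc
    · exact (isDoor_snoc_iff L _ τ).1 (by rwa [hz])

theorem card_fullyLabelled_mod_two :
    ∀ {N : ℕ} {m : ℕ} {L : (Fin N → ℕ) → ℕ}, 0 < m → IsSpernerLabelling m L →
      (#{p ∈ simplices N m | IsFullyLabelled L p} : ZMod 2) = 1
  | 0, m, L, _, hL => by
    have hfull : ∀ p, IsFullyLabelled L p := fun p c hc => by
      obtain rfl : c = 0 := by simpa using hc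
      exact mem_image.2 ⟨0, by simp, Nat.le_zero.1 (hL.le_dim _ fun i => i.elim0)⟩
    rw [filter_true_of_mem fun p _ => hfull p]
    simp [simplices]
  | n + 1, m, L, hm, hL => by
    rw [card_fullyLabelled_eq_card_doors hL, ← card_filter_add_card_filter_not
      (IsBoundary m), Nat.cast_add, card_interior_doors, add_zero, card_boundary_doors hm hL]
    exact card_fullyLabelled_mod_two hm hL.snoc

theorem exists_fullyLabelled {N m : ℕ} {L : (Fin N → ℕ) → ℕ} (hm : 0 < m)
    (hL : IsSpernerLabelling m L) : ∃ p ∈ simplices N m, IsFullyLabelled L p := by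
  by_contra! h
  have := card_fullyLabelled_mod_two hm hL
  rw [filter_false_of_mem h, card_empty, Nat.cast_zero] at this
  exact zero_ne_one this

end Sperner

end Kuhn

section Labelling

variable {n : ℕ}

open Classical in
/-- The least index `k` with `p k ≤ y k`, or `n` if there is none. -/
noncomputable def firstLE (p y : Fin n → ℝ) : ℕ :=
  Nat.find (⟨n, fun i hi => absurd hi i.is_lt.ne⟩ : ∃ k, ∀ i : Fin n, (i : ℕ) = k → p i ≤ y i)

lemma firstLE_le_dim (p y : Fin n → ℝ) : firstLE p y ≤ n :=
  Nat.find_min' _ fun i hi => absurd hi i.is_lt.ne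

lemma firstLE_le {p y : Fin n → ℝ} {i : Fin n} (h : p i ≤ y i) : firstLE p y ≤ i :=
  Nat.find_min' _ fun _ hj => Fin.ext hj ▸ h

lemma apply_le_of_firstLE_eq {p y : Fin n → ℝ} {i : Fin n} (h : firstLE p y = i) : p i ≤ y i :=
  Nat.find_spec (p := fun k => ∀ i : Fin n, (i : ℕ) = k → p i ≤ y i) _ i h.symm

lemma lt_apply_of_lt_firstLE {p y : Fin n → ℝ} {i : Fin n} (h : (i : ℕ) < firstLE p y) :
    y i < p i :=
  lt_of_not_ge fun hle => (firstLE_le hle).not_gt h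

noncomputable def gridPoint (m : ℕ) (v : Fin n → ℕ) : Fin n → ℝ := fun i => v i / m

lemma gridPoint_mem_Icc {m : ℕ} {v : Fin n → ℕ} (hv : ∀ i, v i ≤ m) :
    gridPoint m v ∈ Set.Icc 0 1 :=
  ⟨fun i => by simp only [gridPoint, Pi.zero_apply]; positivity,
    fun i => div_le_one_of_le₀ (Nat.cast_le.2 (hv i)) m.cast_nonneg⟩

lemma dist_gridPoint_vertex_le (m : ℕ) (z : Fin n → ℕ) (σ : Equiv.Perm (Fin n)) (k : ℕ) :
    dist (gridPoint m (Kuhn.vertex z σ k)) (gridPoint m (Kuhn.vertex z σ 0)) ≤ 1 / m := by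
  refine (dist_pi_le_iff (by positivity)).2 fun i => ?_
  rw [Real.dist_eq, gridPoint, gridPoint, ← sub_div, abs_div, Nat.abs_cast]
  gcongr
  simp only [Kuhn.vertex, Nat.not_lt_zero, if_false]
  split_ifs <;> simp

lemma isSpernerLabelling_firstLE {f : (Fin n → ℝ) → Fin n → ℝ}
    (hface0 : ∀ i, ∀ x ∈ Set.Icc (0 : Fin n → ℝ) 1, x i = 0 → f x i = 0)
    (hface1 : ∀ i, ∀ x ∈ Set.Icc (0 : Fin n → ℝ) 1, x i = 1 → f x i = 1)
    {y : Fin n → ℝ} (hy0 : 0 ≤ y) (hy1 : ∀ i, y i < 1) {m : ℕ} (hm : 0 < m) :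
    Kuhn.IsSpernerLabelling m fun v => firstLE (f (gridPoint m v)) y := by
  refine ⟨fun v _ => firstLE_le_dim _ _, fun v hv i hi => firstLE_le ?_, fun v hv i hi h => ?_⟩
  · rw [hface0 i _ (gridPoint_mem_Icc hv) (by simp [gridPoint, hi])]
    exact hy0 i
  · have := hface1 i _ (gridPoint_mem_Icc hv) (by simp [gridPoint, hi, hm.ne'])
    exact (apply_le_of_firstLE_eq h).not_gt (this ▸ hy1 i)

end Labelling

lemma exists_dist_apply_le {n : ℕ} {f : (Fin n → ℝ) → Fin n → ℝ} {K : NNReal}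
    (hf : LipschitzWith K f)
    (hface0 : ∀ i, ∀ x ∈ Set.Icc (0 : Fin n → ℝ) 1, x i = 0 → f x i = 0)
    (hface1 : ∀ i, ∀ x ∈ Set.Icc (0 : Fin n → ℝ) 1, x i = 1 → f x i = 1)
    {y : Fin n → ℝ} (hy0 : 0 ≤ y) (hy1 : ∀ i, y i < 1) {m : ℕ} (hm : 0 < m) :
    ∃ x ∈ Set.Icc (0 : Fin n → ℝ) 1, dist (f x) y ≤ K / m := by
  obtain ⟨⟨z, σ⟩, hp, hfull⟩ :=
    Kuhn.exists_fullyLabelled hm (isSpernerLabelling_firstLE hface0 hface1 hy0 hy1 hm)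
  set v : ℕ → Fin n → ℝ := fun k => f (gridPoint m (Kuhn.vertex z σ k))
  have hclose : ∀ k i, |v k i - v 0 i| ≤ K / m := fun k i => by
    rw [← Real.dist_eq, div_eq_mul_one_div]
    exact (dist_le_pi_dist _ _ i).trans
      ((hf.dist_le_mul _ _).trans (by gcongr; exact dist_gridPoint_vertex_le m z σ k))
  refine ⟨_, gridPoint_mem_Icc (Kuhn.vertex_le hp 0),
    (dist_pi_le_iff (by positivity)).2 fun i => ?_⟩
  obtain ⟨k₁, -, hk₁⟩ := mem_image.1 (hfull (mem_range.2 (i.is_lt.trans n.lt_succ_self)))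
  obtain ⟨k₂, -, hk₂⟩ := mem_image.1 (hfull (mem_range.2 (Nat.succ_lt_succ i.is_lt)))
  have hle : v k₁ i ≤ y i := apply_le_of_firstLE_eq hk₁
  have hlt : y i < v k₂ i :=
    lt_apply_of_lt_firstLE ((show firstLE (v k₂) y = i + 1 from hk₂) ▸ i.val.lt_succ_self)
  rw [Real.dist_eq, abs_le]
  have h₁ := abs_le.1 (hclose k₁ i)
  have h₂ := abs_le.1 (hclose k₂ i)
  constructor <;> linarith [h₁.1, h₁.2, h₂.1, h₂.2]

/-- **Face-preserving Lipschitz maps of the cube are onto.** If a Lipschitz map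
`f : ℝⁿ → ℝⁿ` maps each face of the unit cube `[0,1]ⁿ` into itself, then the image of the cube
under `f` contains the whole cube. -/
theorem surjective_of_maps_faces_to_themselves
    (n : ℕ) (f : (Fin n → ℝ) → (Fin n → ℝ)) (K : NNReal) (hf : LipschitzWith K f)
    (hface0 : ∀ i : Fin n, ∀ x ∈ Set.Icc (0 : Fin n → ℝ) 1,
      x i = 0 → f x ∈ Set.Icc (0 : Fin n → ℝ) 1 ∧ f x i = 0)
    (hface1 : ∀ i : Fin n, ∀ x ∈ Set.Icc (0 : Fin n → ℝ) 1,
      x i = 1 → f x ∈ Set.Icc (0 : Fin n → ℝ) 1 ∧ f x i = 1) :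
    Set.Icc (0 : Fin n → ℝ) 1 ⊆ f '' Set.Icc (0 : Fin n → ℝ) 1 := by
  have hclosed : IsClosed (f '' Set.Icc 0 1) := (isCompact_Icc.image hf.continuous).isClosed
  have hdense : Set.Icc (0 : Fin n → ℝ) 1 ⊆ closure (Set.univ.pi fun _ => Set.Ico 0 1) := by
    rw [closure_pi_set, ← Set.pi_univ_Icc]
    exact Set.pi_mono fun _ _ => (closure_Ico zero_ne_one).ge
  refine hdense.trans (hclosed.closure_subset_iff.2 fun y hy => ?_)
  rw [← hclosed.closure_eq, Metric.mem_closure_iff]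
  intro ε hε
  obtain ⟨m, hm⟩ := exists_nat_gt (K / ε)
  have hm₀ : 0 < m := by exact_mod_cast (div_nonneg K.coe_nonneg hε.le).trans_lt hm
  have hKm : (K : ℝ) / m < ε :=
    (div_lt_iff₀ (by positivity)).2 (by rwa [div_lt_iff₀ hε, mul_comm] at hm)
  obtain ⟨x, hx, hdist⟩ := exists_dist_apply_le hf (fun i x hx h => (hface0 i x hx h).2)
    (fun i x hx h => (hface1 i x hx h).2) (fun i => (hy i trivial).1) (fun i => (hy i trivial).2)
    hm₀
  exact ⟨f x, Set.mem_image_of_mem f hx, (dist_comm _ _).trans_lt (hdist.trans_lt hKm)⟩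
end

section
/- Let f : M → N be a short (1-Lipschitz) volume-preserving map between n-dimensional Riemannian manifolds (viewed as metric measure spaces). Then f is injective. -/
open MeasureTheory

/-- A metric space is an `n`-dimensional Riemannian space if every point admits, for every
`ε > 0`, an `e^{∓ε}`-bilipschitz chart onto an open subset of `n`-dimensional Euclidean
space. (This is the key property of Riemannian spaces with continuous metric tensor.) -/
def IsRiemannianSpace (n : ℕ) (M : Type*) [MetricSpace M] : Prop :=
  ∀ p : M, ∀ ε : ℝ, 0 < ε →
    ∃ (U : Set M) (φ : M → EuclideanSpace ℝ (Fin n)),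
      IsOpen U ∧ p ∈ U ∧ IsOpen (φ '' U) ∧
      ∀ x ∈ U, ∀ y ∈ U,
        dist x y / Real.exp ε ≤ dist (φ x) (φ y) ∧
        dist (φ x) (φ y) ≤ dist x y * Real.exp ε

/-- The Riemannian volume of an `n`-dimensional Riemannian space, as a metric measure:
`vol_n = (ω_n / 2ⁿ) · H^n`, where `ω_n` is the Euclidean volume of the unit `n`-ball. -/
noncomputable def riemVolume (n : ℕ) (M : Type*) [MetricSpace M] [MeasurableSpace M]
    [BorelSpace M] : Measure M :=
  (volume (Metric.closedBall (0 : EuclideanSpace ℝ (Fin n)) 1) / 2 ^ n) • μH[(n : ℝ)]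

/-!
Bilipschitz charts with constant `e^ε` show that, for every `K > 1`, small balls `B(p, r)` have
Hausdorff measure within a factor `K` of the Euclidean `r`-ball. If `f x = f y` with `x ≠ y`, the
preimage of `B(f x, r)` under the short map `f` contains the disjoint balls `B(x, r)` and `B(y, r)`,
so volume preservation forces `2 ≤ K²`, which fails for `K = 5/4`.
-/

open Metric Filter Topology
open scoped ENNReal NNReal

theorem le_hausdorffMeasure_image_of_le_mul_dist {X Y : Type*}
    [MetricSpace X] [MeasurableSpace X] [BorelSpace X]
    [MetricSpace Y] [MeasurableSpace Y] [BorelSpace Y]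
    {f : X → Y} {K : ℝ≥0} {s : Set X}
    (hf : ∀ x ∈ s, ∀ y ∈ s, dist x y ≤ K * dist (f x) (f y)) {d : ℝ} (hd : 0 ≤ d) :
    μH[d] s ≤ (K : ℝ≥0∞) ^ d * μH[d] (f '' s) := by
  rcases s.eq_empty_or_nonempty with rfl | ⟨x₀, -⟩
  · simp
  have : Nonempty X := ⟨x₀⟩
  have hinj : s.InjOn f := fun x hx y hy hxy =>
    dist_le_zero.1 (by simpa [hxy] using hf x hx y hy)
  have hg : LipschitzOnWith K (Function.invFunOn f s) (f '' s) := by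
    refine LipschitzOnWith.of_dist_le_mul ?_
    rintro _ ⟨x, hx, rfl⟩ _ ⟨y, hy, rfl⟩
    rw [hinj.leftInvOn_invFunOn hx, hinj.leftInvOn_invFunOn hy]
    exact hf x hx y hy
  calc μH[d] s = μH[d] (Function.invFunOn f s '' (f '' s)) := by
        rw [hinj.leftInvOn_invFunOn.image_image]
    _ ≤ _ := hg.hausdorffMeasure_image_le hd

theorem LipschitzWith.measure_ball_add_measure_ball_le {M N : Type*}
    [PseudoMetricSpace M] [MeasurableSpace M] [OpensMeasurableSpace M] [PseudoMetricSpace N]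
    (μ : Measure M) {f : M → N} (hf : LipschitzWith 1 f) {x y : M} (hxy : f x = f y) {r : ℝ}
    (hr : 2 * r ≤ dist x y) :
    μ (ball x r) + μ (ball y r) ≤ μ (f ⁻¹' ball (f x) r) := by
  have hball (z : M) : ball z r ⊆ f ⁻¹' ball (f z) r := by
    simpa using (hf.mapsTo_ball one_ne_zero z r).subset_preimage
  rw [← measure_union (ball_disjoint_ball (by linarith)) measurableSet_ball]
  exact measure_mono (Set.union_subset (hball x) (hxy ▸ hball y))

theorem hausdorffMeasure_euclidean_ball_mul {n : ℕ} (z : EuclideanSpace ℝ (Fin n)) {L : ℝ≥0}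
    (hL : 0 < L) (r : ℝ) :
    μH[n] (ball z (L * r)) =
      (L : ℝ≥0∞) ^ n * μH[n] (ball (0 : EuclideanSpace ℝ (Fin n)) r) := by
  rw [Measure.addHaar_ball_mul_of_pos (μH[n] : Measure (EuclideanSpace ℝ (Fin n))) _
    (NNReal.coe_pos.2 hL), finrank_euclideanSpace_fin, ENNReal.ofReal_pow L.coe_nonneg,
    ENNReal.ofReal_coe_nnreal]

section Chart

variable {n : ℕ} {M : Type*} [MetricSpace M] [MeasurableSpace M] [BorelSpace M]
  {φ : M → EuclideanSpace ℝ (Fin n)} {U : Set M} {L : ℝ≥0}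

theorem hausdorffMeasure_euclidean_ball_le_of_chart
    (hφ : ∀ x ∈ U, ∀ y ∈ U,
      dist x y / L ≤ dist (φ x) (φ y) ∧ dist (φ x) (φ y) ≤ dist x y * L)
    (hL : 0 < L) {p : M} {r : ℝ} (hr : 0 < r) (hU : ball p r ⊆ U)
    (hφU : ball (φ p) (r / L) ⊆ φ '' U) :
    μH[n] (ball (0 : EuclideanSpace ℝ (Fin n)) r) ≤
      (L : ℝ≥0∞) ^ (2 * n) * μH[n] (ball p r) := by
  have hpU : p ∈ U := hU (mem_ball_self hr)
  have hsub : ball (φ p) (r / L) ⊆ φ '' ball p r := by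
    intro z hz
    obtain ⟨w, hwU, rfl⟩ := hφU hz
    refine ⟨w, ?_, rfl⟩
    rw [mem_ball', ← div_lt_div_iff_of_pos_right (NNReal.coe_pos.2 hL)]
    exact (hφ p hpU w hwU).1.trans_lt (mem_ball'.1 hz)
  have hlip : LipschitzOnWith L φ (ball p r) :=
    LipschitzOnWith.of_dist_le_mul fun x hx y hy => by
      rw [mul_comm]; exact (hφ x (hU hx) y (hU hy)).2
  calc μH[n] (ball (0 : EuclideanSpace ℝ (Fin n)) r)
      = (L : ℝ≥0∞) ^ n * μH[n] (ball (φ p) (r / L)) := by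
        rw [Measure.addHaar_ball_center _ (φ p), ← hausdorffMeasure_euclidean_ball_mul 0 hL,
          mul_div_cancel₀ _ (NNReal.coe_ne_zero.2 hL.ne')]
    _ ≤ (L : ℝ≥0∞) ^ n * ((L : ℝ≥0∞) ^ n * μH[n] (ball p r)) := by
        gcongr
        calc _ ≤ μH[n] (φ '' ball p r) := measure_mono hsub
          _ ≤ _ := by simpa using hlip.hausdorffMeasure_image_le (Nat.cast_nonneg n)
    _ = _ := by rw [two_mul, pow_add, mul_assoc]

theorem hausdorffMeasure_ball_le_of_chart
    (hφ : ∀ x ∈ U, ∀ y ∈ U,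
      dist x y / L ≤ dist (φ x) (φ y) ∧ dist (φ x) (φ y) ≤ dist x y * L)
    (hL : 0 < L) {p : M} {r : ℝ} (hU : ball p r ⊆ U) :
    μH[n] (ball p r) ≤
      (L : ℝ≥0∞) ^ (2 * n) * μH[n] (ball (0 : EuclideanSpace ℝ (Fin n)) r) := by
  rcases (ball p r).eq_empty_or_nonempty with hr | ⟨q, hq⟩
  · simp [hr]
  have hpU : p ∈ U := hU (mem_ball_self (pos_of_mem_ball hq))
  have hsub : φ '' ball p r ⊆ ball (φ p) (L * r) := by
    rintro _ ⟨x, hx, rfl⟩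
    rw [mem_ball, mul_comm]
    exact (hφ x (hU hx) p hpU).2.trans_lt
      (mul_lt_mul_of_pos_right (mem_ball.1 hx) (NNReal.coe_pos.2 hL))
  have hanti : ∀ x ∈ ball p r, ∀ y ∈ ball p r, dist x y ≤ L * dist (φ x) (φ y) :=
    fun x hx y hy => by
      rw [mul_comm, ← div_le_iff₀ (NNReal.coe_pos.2 hL)]
      exact (hφ x (hU hx) y (hU hy)).1
  calc μH[n] (ball p r) ≤ (L : ℝ≥0∞) ^ n * μH[n] (φ '' ball p r) := by
        simpa using le_hausdorffMeasure_image_of_le_mul_dist hanti (Nat.cast_nonneg n)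
    _ ≤ (L : ℝ≥0∞) ^ n *
          ((L : ℝ≥0∞) ^ n * μH[n] (ball (0 : EuclideanSpace ℝ (Fin n)) r)) := by
        rw [← hausdorffMeasure_euclidean_ball_mul (φ p) hL]
        gcongr
    _ = _ := by rw [two_mul, pow_add, mul_assoc]

end Chart

theorem IsRiemannianSpace.eventually_hausdorffMeasure_ball_le {n : ℕ} {M : Type*}
    [MetricSpace M] [MeasurableSpace M] [BorelSpace M]
    (hM : IsRiemannianSpace n M) (p : M) {K : ℝ≥0} (hK : 1 < K) :
    ∀ᶠ r in 𝓝[>] 0,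
      μH[n] (ball (0 : EuclideanSpace ℝ (Fin n)) r) ≤ K * μH[n] (ball p r) ∧
      μH[n] (ball p r) ≤ K * μH[n] (ball (0 : EuclideanSpace ℝ (Fin n)) r) := by
  obtain ⟨ε, hεK, hε⟩ : ∃ ε : ℝ, Real.exp ε ^ (2 * n) < K ∧ 0 < ε := by
    have h : Tendsto (fun ε => Real.exp ε ^ (2 * n)) (𝓝[>] 0) (𝓝 1) := by
      simpa using ((by fun_prop : Continuous fun ε => Real.exp ε ^ (2 * n)).tendsto 0).mono_left
        nhdsWithin_le_nhds
    exact ((h.eventually (gt_mem_nhds hK)).and self_mem_nhdsWithin).exists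
  obtain ⟨U, φ, hUo, hpU, hφUo, hφ⟩ := hM p ε hε
  set L : ℝ≥0 := ⟨Real.exp ε, (Real.exp_pos ε).le⟩
  have hL : 0 < L := Real.exp_pos ε
  have hLK : (L : ℝ≥0∞) ^ (2 * n) ≤ K := by exact_mod_cast hεK.le
  obtain ⟨r₁, hr₁, hr₁U⟩ := Metric.isOpen_iff.1 hUo p hpU
  obtain ⟨ρ, hρ, hρU⟩ := Metric.isOpen_iff.1 hφUo (φ p) ⟨p, hpU, rfl⟩
  filter_upwards [Ioo_mem_nhdsGT (lt_min hr₁ (mul_pos hρ hL))] with r ⟨hr, hr'⟩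
  have hU : ball p r ⊆ U := (ball_subset_ball (hr'.le.trans (min_le_left _ _))).trans hr₁U
  have hφU : ball (φ p) (r / L) ⊆ φ '' U :=
    (ball_subset_ball ((div_le_iff₀ (NNReal.coe_pos.2 hL)).2
      (hr'.le.trans (min_le_right _ _)))).trans hρU
  exact ⟨(hausdorffMeasure_euclidean_ball_le_of_chart hφ hL hr hU hφU).trans (by gcongr),
    (hausdorffMeasure_ball_le_of_chart hφ hL hU).trans (by gcongr)⟩

theorem riemVolume_eq_riemVolume_iff {n : ℕ} {M N : Type*}
    [MetricSpace M] [MeasurableSpace M] [BorelSpace M]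
    [MetricSpace N] [MeasurableSpace N] [BorelSpace N] {s : Set M} {t : Set N} :
    riemVolume n M s = riemVolume n N t ↔ μH[n] s = μH[n] t := by
  have h0 : volume (closedBall (0 : EuclideanSpace ℝ (Fin n)) 1) / 2 ^ n ≠ 0 :=
    ENNReal.div_ne_zero.2 ⟨(measure_closedBall_pos _ _ one_pos).ne', by simp⟩
  have htop : volume (closedBall (0 : EuclideanSpace ℝ (Fin n)) 1) / 2 ^ n ≠ ∞ :=
    ENNReal.div_ne_top measure_closedBall_lt_top.ne (by simp)
  simp only [riemVolume, Measure.smul_apply, smul_eq_mul, ENNReal.mul_right_inj h0 htop]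

/-- **Short volume-preserving maps are injective.** A short (`1`-Lipschitz) volume-preserving
map `f : M → N` between `n`-dimensional Riemannian spaces is injective. -/
theorem injective_of_short_volume_preserving
    (n : ℕ) {M N : Type*}
    [MetricSpace M] [MeasurableSpace M] [BorelSpace M]
    [MetricSpace N] [MeasurableSpace N] [BorelSpace N]
    (hM : IsRiemannianSpace n M) (hN : IsRiemannianSpace n N)
    (f : M → N) (hshort : LipschitzWith 1 f)
    (hvol : ∀ B : Set N, MeasurableSet B →
      riemVolume n M (f ⁻¹' B) = riemVolume n N B) :
    Function.Injective f := by
  intro x y hfxy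
  by_contra hne
  set K : ℝ≥0 := 5 / 4
  have hK : 1 < K := by norm_num [K]
  obtain ⟨r, ⟨hx, -⟩, ⟨hy, -⟩, ⟨-, hfx⟩, hr, hrxy⟩ :=
    ((hM.eventually_hausdorffMeasure_ball_le x hK).and <|
      (hM.eventually_hausdorffMeasure_ball_le y hK).and <|
      (hN.eventually_hausdorffMeasure_ball_le (f x) hK).and <|
      Ioo_mem_nhdsGT (half_pos (dist_pos.2 hne))).exists
  set ω := μH[n] (ball (0 : EuclideanSpace ℝ (Fin n)) r)
  have hpre : μH[n] (f ⁻¹' ball (f x) r) = μH[n] (ball (f x) r) :=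
    riemVolume_eq_riemVolume_iff.1 (hvol _ measurableSet_ball)
  have hdouble : 2 * ω ≤ (K * K : ℝ≥0) * ω := calc
    2 * ω = ω + ω := two_mul ω
    _ ≤ K * μH[n] (ball x r) + K * μH[n] (ball y r) := add_le_add hx hy
    _ ≤ K * μH[n] (ball (f x) r) := by
        rw [← mul_add, ← hpre]
        gcongr
        exact hshort.measure_ball_add_measure_ball_le _ hfxy (by linarith)
    _ ≤ K * (K * ω) := by gcongr
    _ = (K * K : ℝ≥0) * ω := by push_cast; ring
  have hKK : (2 : ℝ≥0) ≤ K * K := by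
    exact_mod_cast (ENNReal.mul_le_mul_iff_left (measure_ball_pos _ _ hr).ne'
      measure_ball_lt_top.ne).1 hdouble
  rw [← NNReal.coe_le_coe] at hKK
  norm_num [K] at hKK
end

section
/- Let P be a connected compact 1-dimensional Riemannian polyhedron (a finite metric graph with length metric). If for some R > 0 every open ball of radius R in P has 1-dimensional Hausdorff measure (total length) strictly less than R, then the radius of P is strictly less than R; that is, there exists a point p ∈ P with P ⊆ B(p, R). -/
open MeasureTheory

/-- A metric space is geodesic if any two points are joined by a path realizing the
distance (parameterized isometrically by an interval). A connected compact `1`-dimensional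
Riemannian polyhedron (finite metric graph with its length metric) is such a space. -/
def IsGeodesicSpace (X : Type*) [MetricSpace X] : Prop :=
  ∀ x y : X, ∃ f : ℝ → X, f 0 = x ∧ f (dist x y) = y ∧
    ∀ s ∈ Set.Icc (0:ℝ) (dist x y), ∀ t ∈ Set.Icc (0:ℝ) (dist x y),
      dist (f s) (f t) = |s - t|

/-- **Width of 1-dimensional polyhedra.** Let `P` be a connected compact `1`-dimensional
Riemannian polyhedron (a finite metric graph with its length metric). If for some `R > 0`
every open ball of radius `R` has `1`-dimensional Hausdorff measure (total length) strictly
less than `R`, then `P` has radius less than `R`: there is a point `p` with `P ⊆ B(p, R)`. -/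
theorem radius_lt_of_volume_profile_lt
    {P : Type*} [MetricSpace P] [CompactSpace P] [ConnectedSpace P] [Nonempty P]
    [MeasurableSpace P] [BorelSpace P]
    (hgeo : IsGeodesicSpace P)
    (R : ℝ) (hR : 0 < R)
    (hprofile : ∀ p : P, μH[1] (Metric.ball p R) < ENNReal.ofReal R) :
    ∃ p : P, ∀ q : P, dist p q < R := by
  by_contra h
  push_neg at h
  obtain ⟨p₀⟩ := ‹Nonempty P›
  obtain ⟨q, hq⟩ := h p₀
  obtain ⟨f, hf0, hfd, hiso⟩ := hgeo p₀ q
  have hd : (0:ℝ) ≤ dist p₀ q := dist_nonneg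
  have h0 : (0:ℝ) ∈ Set.Icc 0 (dist p₀ q) := ⟨le_refl _, hd⟩
  have hsub : Set.Ico (0:ℝ) R ⊆ Set.Icc 0 (dist p₀ q) := fun t ht =>
    ⟨ht.1, le_trans (le_of_lt ht.2) hq⟩
  have hdist : ∀ t ∈ Set.Ico (0:ℝ) R, dist p₀ (f t) = t := by
    intro t ht
    have := hiso 0 h0 t (hsub ht)
    rw [← hf0, this, zero_sub, abs_neg, abs_of_nonneg ht.1]
  have himg : f '' Set.Ico 0 R ⊆ Metric.ball p₀ R := by
    rintro _ ⟨t, ht, rfl⟩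
    rw [Metric.mem_ball, dist_comm, hdist t ht]
    exact ht.2
  have hlip : LipschitzWith 1 (fun x : P => dist p₀ x) := LipschitzWith.dist_right p₀
  have hpre : Set.Ico (0:ℝ) R ⊆ (fun x : P => dist p₀ x) '' (f '' Set.Ico 0 R) := by
    intro t ht
    exact ⟨f t, Set.mem_image_of_mem f ht, hdist t ht⟩
  have h1 : ENNReal.ofReal R ≤ μH[1] (f '' Set.Ico 0 R) := by
    have hle := hlip.hausdorffMeasure_image_le (d := 1) zero_le_one (f '' Set.Ico 0 R)
    calc ENNReal.ofReal R = μH[1] (Set.Ico (0:ℝ) R) := by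
          rw [MeasureTheory.hausdorffMeasure_real, Real.volume_Ico, sub_zero]
      _ ≤ μH[1] ((fun x : P => dist p₀ x) '' (f '' Set.Ico 0 R)) := measure_mono hpre
      _ ≤ μH[1] (f '' Set.Ico 0 R) := by simpa using hle
  exact lt_irrefl _ ((h1.trans (measure_mono himg)).trans_lt (hprofile p₀))
end

section
/- Let Q be an R-separating subpolyhedron of a compact n-dimensional Riemannian polyhedron P; that is, Q is an (n−1)-dimensional subpolyhedron (with induced length metric) such that every connected component U of P \ Q has radius less than R in P. If width_{n−2}(Q) ≤ R, then width_{n−1}(P) ≤ R. -/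
open Metric ENNReal

/-- The radius of a subset `A` of a metric space `X`: the infimum of `R` such that `A` is
contained in a ball `B(x, R)` for some `x ∈ X`. -/
noncomputable def setRadius {X : Type*} [MetricSpace X] (A : Set X) : ℝ≥0∞ :=
  ⨅ (x : X) (R : ℝ≥0∞) (_ : A ⊆ EMetric.ball x R), R

/-- The `m`-th width of a metric space `X`: the infimum, over finite open covers of `X` of
multiplicity at most `m + 1`, of the largest radius of a member of the cover. -/
noncomputable def width (X : Type*) [MetricSpace X] (m : ℕ) : ℝ≥0∞ :=
  ⨅ (k : ℕ) (V : Fin k → Set X)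
    (_ : ∀ i, IsOpen (V i)) (_ : ⋃ i, V i = Set.univ)
    (_ : ∀ x : X, Nat.card {i : Fin k // x ∈ V i} ≤ m + 1),
    ⨆ i, setRadius (V i)

/-!
Fix `b > R`. A cover of `Q` of multiplicity at most `n - 1` by sets of radius less than `b`
thickens, via a Lebesgue number of the cover, to open sets of `P` of radius still less than `b`,
with the same multiplicity, covering `Q`. What remains of `P` is a compact set `K ⊆ P \ Q`. In the
compact Hausdorff space `K` a connected component is the intersection of its clopen
neighbourhoods, so `K` splits into finitely many disjoint clopen pieces, each inside a ball of
radius `R` that contains a component of `P \ Q`. These pieces have pairwise disjoint open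
neighbourhoods, and adding them to the cover raises its multiplicity by at most one.
-/

open Function

section SetRadius

variable {X Y : Type*} [MetricSpace X] [MetricSpace Y]

theorem setRadius_le_of_subset_eball {A : Set X} {c : X} {r : ℝ≥0∞} (h : A ⊆ eball c r) :
    setRadius A ≤ r :=
  iInf₂_le_of_le c r (iInf_le _ h)

theorem exists_subset_eball_of_setRadius_lt {A : Set X} {r : ℝ≥0∞} (h : setRadius A < r) :
    ∃ c, A ⊆ eball c r := by
  simp only [setRadius, iInf_lt_iff] at h
  obtain ⟨c, r', hA, hr'⟩ := h
  exact ⟨c, hA.trans (eball_subset_eball hr'.le)⟩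

theorem setRadius_mono {A B : Set X} (h : A ⊆ B) : setRadius A ≤ setRadius B :=
  le_iInf₂ fun _ _ => le_iInf fun hB => setRadius_le_of_subset_eball (h.trans hB)

theorem Isometry.setRadius_image_le {f : X → Y} (hf : Isometry f) (A : Set X) :
    setRadius (f '' A) ≤ setRadius A := by
  refine le_iInf₂ fun c r => le_iInf fun hA => setRadius_le_of_subset_eball (c := f c) ?_
  rintro _ ⟨a, ha, rfl⟩
  rw [mem_eball, hf.edist_eq]
  exact hA ha

theorem setRadius_thickening_le (δ : ℝ) (A : Set X) :
    setRadius (thickening δ A) ≤ setRadius A + ENNReal.ofReal δ := by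
  simp only [setRadius, ENNReal.iInf_add]
  refine le_iInf₂ fun c r => le_iInf fun hA =>
    setRadius_le_of_subset_eball (c := c) fun x hx => ?_
  obtain ⟨a, ha, hxa⟩ := mem_thickening_iff_infEDist_lt.1 hx |> infEDist_lt_iff.1
  calc edist x c ≤ edist x a + edist a c := edist_triangle x a c
    _ < ENNReal.ofReal δ + r := ENNReal.add_lt_add hxa (hA ha)
    _ = r + ENNReal.ofReal δ := add_comm _ _

end SetRadius

section Width

variable {X : Type*} [MetricSpace X] {m : ℕ} {b : ℝ≥0∞}

theorem width_le_of_cover {ι : Type*} [Finite ι] (V : ι → Set X) (hV : ∀ i, IsOpen (V i))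
    (hcover : ⋃ i, V i = Set.univ) (hmult : ∀ x, Nat.card {i // x ∈ V i} ≤ m + 1)
    (hrad : ∀ i, setRadius (V i) ≤ b) : width X m ≤ b := by
  let e := (Finite.equivFin ι).symm
  refine iInf_le_of_le _ (iInf_le_of_le (fun j => V (e j)) (iInf_le_of_le (fun j => hV (e j))
    (iInf_le_of_le ?_ (iInf_le_of_le (fun x => ?_) (iSup_le fun j => hrad (e j))))))
  · rwa [e.surjective.iUnion_comp V]
  · exact (Nat.card_congr (e.subtypeEquiv fun _ => Iff.rfl)).trans_le (hmult x)

theorem exists_cover_of_width_lt (h : width X m < b) :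
    ∃ (k : ℕ) (V : Fin k → Set X), (∀ i, IsOpen (V i)) ∧ ⋃ i, V i = Set.univ ∧
      (∀ x, Nat.card {i // x ∈ V i} ≤ m + 1) ∧ ∀ i, setRadius (V i) < b := by
  simp only [width, iInf_lt_iff] at h
  obtain ⟨k, V, hV, hcover, hmult, hrad⟩ := h
  exact ⟨k, V, hV, hcover, hmult, fun i => (le_iSup (fun i => setRadius (V i)) i).trans_lt hrad⟩

end Width

theorem card_mem_sumElim {α ι κ : Type*} [Finite ι] [Finite κ] (U : ι → Set α)
    (G : κ → Set α) (x : α) :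
    Nat.card {s // x ∈ Sum.elim U G s} = Nat.card {i // x ∈ U i} + Nat.card {j // x ∈ G j} := by
  rw [Nat.card_congr Equiv.subtypeSum, Nat.card_sum]
  rfl

theorem card_mem_le_one_of_pairwise_disjoint {α ι : Type*} [Finite ι] {G : ι → Set α}
    (hG : Pairwise (Disjoint on G)) (x : α) : Nat.card {i // x ∈ G i} ≤ 1 :=
  Finite.card_le_one_iff_subsingleton.2
    ⟨fun i j => Subtype.ext (hG.eq (Set.not_disjoint_iff.2 ⟨x, i.2, j.2⟩))⟩

section Clopen

variable {X : Type*} [TopologicalSpace X] [CompactSpace X]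

theorem exists_isClopen_mem_subset_of_connectedComponent_subset [T2Space X] {x : X}
    {U : Set X} (hU : IsOpen U) (h : connectedComponent x ⊆ U) :
    ∃ Z, IsClopen Z ∧ x ∈ Z ∧ Z ⊆ U := by
  obtain ⟨u, hu⟩ := hU.isClosed_compl.isCompact.elim_finite_subfamily_closed
    (fun s : {s : Set X // IsClopen s ∧ x ∈ s} => (s : Set X)) (fun s => s.2.1.isClosed)
    (by rw [← connectedComponent_eq_iInter_isClopen, Set.inter_comm]
        exact Set.sdiff_eq_empty.2 h)
  refine ⟨⋂ s ∈ u, s, isClopen_biInter_finset fun s _ => s.2.1,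
    Set.mem_iInter₂.2 fun s _ => s.2.2, ?_⟩
  rw [Set.inter_comm] at hu
  exact Set.sdiff_eq_empty.1 hu

theorem exists_pairwise_disjoint_clopen_cover {ι : Type*} {W : ι → Set X}
    (h : ∀ x, ∃ Z, IsClopen Z ∧ x ∈ Z ∧ ∃ i, Z ⊆ W i) :
    ∃ (m : ℕ) (D : Fin m → Set X), (∀ j, IsClopen (D j)) ∧ ⋃ j, D j = Set.univ ∧
      Pairwise (Disjoint on D) ∧ ∀ j, ∃ i, D j ⊆ W i := by
  choose Z hZ hxZ c hZW using h
  obtain ⟨t, ht⟩ := isCompact_univ.elim_finite_subcover Z (fun x => (hZ x).isOpen)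
    fun x _ => Set.mem_iUnion.2 ⟨x, hxZ x⟩
  let Z' : Fin t.card → Set X := fun j => Z (t.equivFin.symm j)
  refine ⟨t.card, disjointed Z',
    fun j => disjointedRec (fun _ _ hs => hs.diff (hZ _)) (hZ _), ?_, disjoint_disjointed Z',
    fun j => ⟨_, (disjointed_subset Z' j).trans (hZW _)⟩⟩
  rw [iUnion_disjointed, Set.eq_univ_iff_forall]
  intro x
  obtain ⟨y, hy, hxy⟩ := Set.mem_iUnion₂.1 (ht (Set.mem_univ x))
  exact Set.mem_iUnion.2 ⟨t.equivFin ⟨y, hy⟩, by simpa [Z'] using hxy⟩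

end Clopen

theorem exists_pairwise_disjoint_open_supersets {X ι : Type*} [PseudoEMetricSpace X] [Finite ι]
    {D : ι → Set X} (hD : ∀ i, IsClosed (D i)) (hdisj : Pairwise (Disjoint on D)) :
    ∃ G : ι → Set X, (∀ i, IsOpen (G i)) ∧ (∀ i, D i ⊆ G i) ∧ Pairwise (Disjoint on G) := by
  let others (i : ι) : Set X := ⋃ (j) (_ : j ≠ i), D j
  refine ⟨fun i => {x | infEDist x (D i) < infEDist x (others i)},
    fun i => isOpen_lt continuous_infEDist continuous_infEDist, fun i x hx => ?_, ?_⟩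
  · have hclosed : IsClosed (others i) :=
      isClosed_iUnion_of_finite fun j => isClosed_iUnion_of_finite fun _ => hD j
    have hx' : x ∉ others i := by
      simp only [others, Set.mem_iUnion, not_exists]
      exact fun j hji hxj => Set.disjoint_left.1 (hdisj hji) hxj hx
    show infEDist x (D i) < infEDist x (others i)
    rwa [infEDist_zero_of_mem hx, pos_iff_ne_zero, Ne, ← mem_closure_iff_infEDist_zero,
      hclosed.closure_eq]
  · intro i j hij
    refine Set.disjoint_left.2 fun x (hi : _ < _) (hj : _ < _) => lt_asymm
      (hi.trans_le (infEDist_anti (Set.subset_iUnion₂ (s := fun l (_ : l ≠ i) => D l) j hij.symm)))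
      (hj.trans_le (infEDist_anti (Set.subset_iUnion₂ (s := fun l (_ : l ≠ j) => D l) i hij)))

theorem exists_pairwise_disjoint_open_cover_of_setRadius_connectedComponentIn_lt {X : Type*}
    [MetricSpace X] {S K : Set X} (hK : IsCompact K) (hKS : K ⊆ S) {R : ℝ≥0∞}
    (hS : ∀ x ∈ S, setRadius (connectedComponentIn S x) < R) :
    ∃ (m : ℕ) (G : Fin m → Set X), (∀ j, IsOpen (G j)) ∧ K ⊆ ⋃ j, G j ∧
      Pairwise (Disjoint on G) ∧ ∀ j, setRadius (G j) ≤ R := by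
  have : CompactSpace K := isCompact_iff_compactSpace.1 hK
  have hclopen (x : K) : ∃ Z : Set K, IsClopen Z ∧ x ∈ Z ∧
      ∃ c, Z ⊆ ((↑) : K → X) ⁻¹' eball c R := by
    obtain ⟨c, hc⟩ := exists_subset_eball_of_setRadius_lt (hS x (hKS x.2))
    have hcomp : connectedComponent x ⊆ (↑) ⁻¹' eball c R := by
      rw [← Set.image_subset_iff, ← connectedComponentIn_eq_image x.2]
      exact (connectedComponentIn_mono _ hKS).trans hc
    obtain ⟨Z, hZ, hxZ, hZc⟩ := exists_isClopen_mem_subset_of_connectedComponent_subset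
      (isOpen_eball.preimage continuous_subtype_val) hcomp
    exact ⟨Z, hZ, hxZ, c, hZc⟩
  obtain ⟨m, D, hD, hDcover, hDdisj, hDc⟩ := exists_pairwise_disjoint_clopen_cover hclopen
  choose c hc using hDc
  obtain ⟨G, hG, hDG, hGdisj⟩ := exists_pairwise_disjoint_open_supersets
    (D := fun j => Subtype.val '' D j)
    (fun j => ((hD j).isClosed.isCompact.image continuous_subtype_val).isClosed)
    fun i j hij => (Set.disjoint_image_iff Subtype.val_injective).2 (hDdisj hij)
  refine ⟨m, fun j => G j ∩ eball (c j) R, fun j => (hG j).inter isOpen_eball, fun x hx => ?_,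
    fun i j hij => (hGdisj hij).mono Set.inter_subset_left Set.inter_subset_left,
    fun j => setRadius_le_of_subset_eball Set.inter_subset_right⟩
  obtain ⟨j, hj⟩ := Set.mem_iUnion.1 (hDcover.ge (Set.mem_univ ⟨x, hx⟩))
  exact Set.mem_iUnion.2 ⟨j, hDG j ⟨_, hj, rfl⟩, hc j hj⟩

theorem exists_open_thickening_of_cover {X ι : Type*} [MetricSpace X] [Finite ι] {Q : Set X}
    (hQ : IsCompact Q) {V : ι → Set Q} (hV : ∀ i, IsOpen (V i)) (hcover : ⋃ i, V i = Set.univ)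
    {m : ℕ} (hmult : ∀ q, Nat.card {i // q ∈ V i} ≤ m) {η : ℝ} (hη : 0 < η) :
    ∃ U : ι → Set X, (∀ i, IsOpen (U i)) ∧ Q ⊆ ⋃ i, U i ∧ (∀ x, Nat.card {i // x ∈ U i} ≤ m) ∧
      ∀ i, setRadius (U i) ≤ setRadius (V i) + ENNReal.ofReal η := by
  have : CompactSpace Q := isCompact_iff_compactSpace.1 hQ
  obtain ⟨δ, hδ, hleb⟩ := lebesgue_number_lemma_of_metric isCompact_univ hV hcover.ge
  set ε := min η (δ / 2)
  have hε : 0 < ε := lt_min hη (half_pos hδ)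
  -- Points near `Q` but not near `Q \ V i`; they still cover `Q` because `ε` is less than the
  -- Lebesgue number `δ` of `V`.
  let U (i : ι) : Set X := thickening ε Q \ cthickening ε (Q \ Subtype.val '' V i)
  have mem_V {x : X} {i : ι} (hx : x ∈ U i) (q : Q) (hxq : dist x q < ε) : q ∈ V i := by
    by_contra hq
    exact hx.2 (mem_cthickening_of_dist_le x q ε _ ⟨q.2, fun ⟨q', hq', h⟩ =>
      hq (Subtype.ext h ▸ hq')⟩ hxq.le)
  have exists_near (x : X) (i : ι) (hx : x ∈ U i) : ∃ q : Q, dist x q < ε := by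
    obtain ⟨q, hq, hxq⟩ := mem_thickening_iff.1 hx.1
    exact ⟨⟨q, hq⟩, hxq⟩
  refine ⟨U, fun i => isOpen_thickening.sdiff isClosed_cthickening, fun q hq => ?_,
    fun x => ?_, fun i => ?_⟩
  · obtain ⟨i, hi⟩ := hleb ⟨q, hq⟩ (Set.mem_univ _)
    refine Set.mem_iUnion.2 ⟨i, self_subset_thickening hε Q hq, fun hqV => ?_⟩
    obtain ⟨y, ⟨hyQ, hyV⟩, hqy⟩ := mem_thickening_iff.1
      (cthickening_subset_thickening' hδ ((min_le_right _ _).trans_lt (half_lt_self hδ)) _ hqV)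
    exact hyV ⟨⟨y, hyQ⟩, hi (by rwa [mem_ball, Subtype.dist_eq, dist_comm]), rfl⟩
  · rcases isEmpty_or_nonempty {i // x ∈ U i} with _ | ⟨i, hi⟩
    · simp
    obtain ⟨q, hxq⟩ := exists_near x i hi
    exact (Nat.card_le_card_of_injective _
      (Subtype.impEmbedding _ _ fun j hj => mem_V hj q hxq).injective).trans (hmult q)
  · have hUV : U i ⊆ thickening η (Subtype.val '' V i) := fun x hx => by
      obtain ⟨q, hxq⟩ := exists_near x i hx
      exact mem_thickening_iff.2 ⟨q, ⟨q, mem_V hx q hxq, rfl⟩, hxq.trans_le (min_le_left _ _)⟩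
    calc setRadius (U i) ≤ setRadius (Subtype.val '' V i) + ENNReal.ofReal η :=
          (setRadius_mono hUV).trans (setRadius_thickening_le η _)
      _ ≤ setRadius (V i) + ENNReal.ofReal η :=
          add_le_add_left (isometry_subtype_coe.setRadius_image_le (V i)) _

theorem width_le_of_separating_subpolyhedron_general
    (n : ℕ) (hn : 2 ≤ n) {P : Type*} [MetricSpace P] [CompactSpace P]
    (Q : Set P) (hQclosed : IsClosed Q)
    (R : ℝ≥0∞)
    (hsep : ∀ x ∈ Qᶜ, setRadius (connectedComponentIn Qᶜ x) < R)
    (hQwidth : width Q (n - 2) ≤ R) :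
    width P (n - 1) ≤ R := by
  refine le_of_forall_gt_imp_ge_of_dense fun b hRb => ?_
  obtain ⟨b', hRb', hb'b⟩ := exists_between hRb
  obtain ⟨η, hη, hb'η⟩ := ENNReal.lt_iff_exists_add_pos_lt.1 hb'b
  obtain ⟨k, V, hVopen, hVcover, hVmult, hVrad⟩ := exists_cover_of_width_lt (hQwidth.trans_lt hRb')
  obtain ⟨U, hUopen, hQU, hUmult, hUrad⟩ :=
    exists_open_thickening_of_cover hQclosed.isCompact hVopen hVcover hVmult (NNReal.coe_pos.2 hη)
  obtain ⟨m, G, hGopen, hGcover, hGdisj, hGrad⟩ :=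
    exists_pairwise_disjoint_open_cover_of_setRadius_connectedComponentIn_lt
      (isOpen_iUnion hUopen).isClosed_compl.isCompact (Set.compl_subset_compl.2 hQU) hsep
  refine width_le_of_cover (Sum.elim U G) (Sum.forall.2 ⟨hUopen, hGopen⟩) ?_ (fun x => ?_)
    (Sum.forall.2 ⟨fun i => ?_, fun j => (hGrad j).trans hRb.le⟩)
  · rw [Set.iUnion_sum, Set.eq_univ_iff_forall]
    exact fun x => (em _).imp id fun hx => hGcover hx
  · have hGx := card_mem_le_one_of_pairwise_disjoint hGdisj x
    have hUx := hUmult x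
    rw [card_mem_sumElim]
    omega
  · calc setRadius (U i) ≤ setRadius (V i) + η := by simpa using hUrad i
      _ ≤ b' + η := by gcongr; exact (hVrad i).le
      _ ≤ b := hb'η.le

/-- **Separating subpolyhedra and width.** Let `Q` be an `R`-separating subpolyhedron of a
compact `n`-dimensional Riemannian polyhedron `P`: a closed `(n-1)`-dimensional subpolyhedron
such that every connected component of `P \ Q` has radius less than `R` in `P`.
If `width_{n-2} Q ≤ R`, then `width_{n-1} P ≤ R`. -/
theorem width_le_of_separating_subpolyhedron
    (n : ℕ) (hn : 2 ≤ n) {P : Type*} [MetricSpace P] [CompactSpace P] [Nonempty P]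
    (Q : Set P) (hQclosed : IsClosed Q)
    (R : ℝ≥0∞)
    (hsep : ∀ x ∈ Qᶜ, setRadius (connectedComponentIn Qᶜ x) < R)
    (hQwidth : width Q (n - 2) ≤ R) :
    width P (n - 1) ≤ R :=
  width_le_of_separating_subpolyhedron_general n hn Q hQclosed R hsep hQwidth
end

section
/- Let X be a metric space and suppose a closed curve γ : S¹ → X can be subdivided into four consecutive arcs α, β, α′, β′ such that dist(x, x′) > a for all x ∈ α, x′ ∈ α′, and dist(y, y′) > a for all y ∈ β, y′ ∈ β′. Then for any continuous extension h : D² → X of γ to the disk, there exists a point z ∈ D² such that dist(h(z), γ(t)) ≥ a/2 for all t; in particular γ is not contractible within its (a/2)-neighborhood. -/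
/-!
Put `w(x) = (d(x, α) - a/2) + (d(x, β) - a/2) i`. If every point of `H` were within `a/2` of `γ`,
then `w ∘ H` would avoid `0` and so have a continuous logarithm on the square; as `H` is a
null-homotopy through loops, this logarithm closes up along the bottom edge `γ`. But along `γ`
the point `w` runs through the half-planes `re < 0`, `im < 0`, `re > 0`, `im > 0` in turn, so the
imaginary part of the logarithm strictly increases over each of the four arcs.
-/

open Set Metric unitInterval

namespace Complex

variable {A : Type*} [TopologicalSpace A]

theorem const_of_exp_comp [PreconnectedSpace A] {g : A → ℂ} (hg : Continuous g)
    (h : ∀ a a', exp (g a) = exp (g a')) (a a' : A) : g a = g a' :=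
  isCoveringMap_exp.const_of_comp hg (fun a a' ↦ Subtype.ext (h a a')) a a'

theorem constOn_of_exp_comp {S : Set A} (hS : IsPreconnected S) {g : A → ℂ}
    (hg : ContinuousOn g S) (h : ∀ a ∈ S, ∀ a' ∈ S, exp (g a) = exp (g a')) {a a' : A}
    (ha : a ∈ S) (ha' : a' ∈ S) : g a = g a' :=
  isCoveringMap_exp.constOn_of_comp hS hg (fun a ha a' ha' ↦ Subtype.ext (h a ha a' ha')) ha ha'

/-- While `exp ∘ θ` stays in the half-plane `{z | 0 < (z * u).re}`, `im ∘ θ` differs from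
`arg ((exp ∘ θ) * u)` by a constant. -/
theorem im_lt_im_of_re_exp_mul_pos {S : Set A} (hS : IsPreconnected S) {θ : A → ℂ}
    (hθ : ContinuousOn θ S) {u : ℂ} (hre : ∀ s ∈ S, 0 < (exp (θ s) * u).re) {p q : A}
    (hp : p ∈ S) (hq : q ∈ S) (hp_im : (exp (θ p) * u).im < 0)
    (hq_im : 0 ≤ (exp (θ q) * u).im) : (θ p).im < (θ q).im := by
  have hu : u ≠ 0 := by rintro rfl; simpa using hre p hp
  have hexp : ∀ s ∈ S, exp (θ s - log (exp (θ s) * u)) = u⁻¹ := fun s hs ↦ by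
    rw [exp_sub, exp_log (mul_ne_zero (exp_ne_zero _) hu), div_mul_cancel_left₀ (exp_ne_zero _)]
  have hcont : ContinuousOn (fun s ↦ θ s - log (exp (θ s) * u)) S :=
    hθ.sub <| ((continuous_exp.comp_continuousOn hθ).mul continuousOn_const).clog
      fun s hs ↦ mem_slitPlane_iff.2 (.inl (hre s hs))
  have hconst := congrArg im <| constOn_of_exp_comp hS hcont
    (fun s hs s' hs' ↦ (hexp s hs).trans (hexp s' hs').symm) hp hq
  simp only [sub_im, log_im] at hconst
  linarith [arg_neg_iff.2 hp_im, arg_nonneg_iff.2 hq_im]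

theorem im_lt_im_of_four_arcs {c θ : I → ℂ} (hθ : Continuous θ)
    (hexp : ∀ s, exp (θ s) = c s) (hloop : c 0 = c 1) {t₁ t₂ t₃ : I}
    (h12 : t₁ ≤ t₂) (h23 : t₂ ≤ t₃)
    (hα : ∀ s ∈ Icc 0 t₁, (c s).re < 0) (hβ : ∀ s ∈ Icc t₁ t₂, (c s).im < 0)
    (hα' : ∀ s ∈ Icc t₂ t₃, 0 < (c s).re) (hβ' : ∀ s ∈ Icc t₃ 1, 0 < (c s).im) :
    (θ 0).im < (θ 1).im := by
  simp only [← hexp] at hloop hα hβ hα' hβ'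
  have arc {p q : I} (hpq : p ≤ q) (u : ℂ) (hre : ∀ s ∈ Icc p q, 0 < (exp (θ s) * u).re)
      (hp : (exp (θ p) * u).im < 0) (hq : 0 ≤ (exp (θ q) * u).im) : (θ p).im < (θ q).im :=
    im_lt_im_of_re_exp_mul_pos isPreconnected_Icc hθ.continuousOn hre
      (left_mem_Icc.2 hpq) (right_mem_Icc.2 hpq) hp hq
  have h₁ : (θ 0).im < (θ t₁).im :=
    arc nonneg' (-1) (fun s hs ↦ by simpa using hα s hs)
    (by simpa [hloop] using hβ' 1 ⟨le_one', le_rfl⟩)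
    (by simpa using (hβ t₁ ⟨le_rfl, h12⟩).le)
  have h₂ : (θ t₁).im < (θ t₂).im :=
    arc h12 Complex.I (fun s hs ↦ by simpa using hβ s hs)
    (by simpa using hα t₁ ⟨nonneg', le_rfl⟩)
    (by simpa using (hα' t₂ ⟨le_rfl, h23⟩).le)
  have h₃ : (θ t₂).im < (θ t₃).im :=
    arc h23 1 (fun s hs ↦ by simpa using hα' s hs)
    (by simpa using hβ t₂ ⟨h12, le_rfl⟩)
    (by simpa using (hβ' t₃ ⟨le_rfl, le_one'⟩).le)
  have h₄ : (θ t₃).im < (θ 1).im :=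
    arc le_one' (-Complex.I) (fun s hs ↦ by simpa using hβ' s hs)
    (by simpa using hα' t₃ ⟨h23, le_rfl⟩)
    (by simpa [← hloop] using (hα 0 ⟨le_rfl, nonneg'⟩).le)
  linarith

theorem exists_closed_log_of_nullhomotopy (f : C(I × I, ℂ)) (hf : ∀ z, f z ≠ 0)
    (hloop : ∀ t, f (0, t) = f (1, t)) (htop : ∀ s, f (s, 1) = f (0, 1)) :
    ∃ θ : I → ℂ, Continuous θ ∧ (∀ s, exp (θ s) = f (s, 0)) ∧ θ 0 = θ 1 := by
  have : ContractibleSpace I :=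
    (convex_Icc (0 : ℝ) 1).contractibleSpace ⟨0, left_mem_Icc.2 zero_le_one⟩
  have : LocallyPathConnectedSpace I := (convex_Icc (0 : ℝ) 1).locallyPathConnectedSpace
  obtain ⟨F, ⟨-, hF⟩, -⟩ := isCoveringMapOn_exp.existsUnique_continuousMap_lifts f
    (a₀ := (0, 0)) (exp_log (hf (0, 0))) hf
  have hF (z : I × I) : exp (F z) = f z := congrFun hF z
  have hside := const_of_exp_comp (g := fun t ↦ F (1, t) - F (0, t)) (by fun_prop)
    (fun t t' ↦ by simp only [exp_sub, hF, hloop, div_self (hf _)]) 0 1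
  have htop := const_of_exp_comp (g := fun s ↦ F (s, 1)) (by fun_prop)
    (fun s s' ↦ by simp only [hF, htop]) 0 1
  refine ⟨fun s ↦ F (s, 0), by fun_prop, fun s ↦ hF _, ?_⟩
  linear_combination htop - hside

end Complex

section InfDistCoord

variable {X : Type*} [MetricSpace X]

/-- The map `w - (a/2, a/2)` of the paper, without truncating `w` at `a`. -/
noncomputable def infDistCoord (A B : Set X) (a : ℝ) (x : X) : ℂ :=
  ⟨infDist x A - a / 2, infDist x B - a / 2⟩

@[simp] theorem infDistCoord_re (A B : Set X) (a : ℝ) (x : X) :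
    (infDistCoord A B a x).re = infDist x A - a / 2 := rfl

@[simp] theorem infDistCoord_im (A B : Set X) (a : ℝ) (x : X) :
    (infDistCoord A B a x).im = infDist x B - a / 2 := rfl

theorem continuous_infDistCoord (A B : Set X) (a : ℝ) : Continuous (infDistCoord A B a) :=
  Complex.equivRealProdCLM.symm.continuous.comp <|
    ((continuous_infDist_pt A).sub continuous_const).prodMk
      ((continuous_infDist_pt B).sub continuous_const)

theorem le_infDist_image {ι : Type*} {γ : ι → X} {s : Set ι} (hs : s.Nonempty) {a : ℝ}
    {y : X} (h : ∀ x ∈ s, a < dist (γ x) y) : a ≤ infDist y (γ '' s) :=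
  (le_infDist (hs.image γ)).2 <| forall_mem_image.2 fun x hx ↦ (dist_comm (γ x) y ▸ h x hx).le

variable {A B : Set X} {a : ℝ} {x y : X}

theorem infDistCoord_re_neg_of_dist_lt (hy : y ∈ A) (hxy : dist x y < a / 2) :
    (infDistCoord A B a x).re < 0 :=
  sub_neg.2 <| (infDist_le_dist_of_mem hy).trans_lt hxy

theorem infDistCoord_im_neg_of_dist_lt (hy : y ∈ B) (hxy : dist x y < a / 2) :
    (infDistCoord A B a x).im < 0 :=
  sub_neg.2 <| (infDist_le_dist_of_mem hy).trans_lt hxy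

theorem infDistCoord_re_pos_of_dist_lt (hy : a ≤ infDist y A) (hxy : dist x y < a / 2) :
    0 < (infDistCoord A B a x).re := by
  linarith [infDistCoord_re A B a x, infDist_le_infDist_add_dist (s := A) (x := y) (y := x),
    dist_comm x y]

theorem infDistCoord_im_pos_of_dist_lt (hy : a ≤ infDist y B) (hxy : dist x y < a / 2) :
    0 < (infDistCoord A B a x).im := by
  linarith [infDistCoord_im A B a x, infDist_le_infDist_add_dist (s := B) (x := y) (y := x),
    dist_comm x y]

theorem infDistCoord_ne_zero_of_dist_lt {γ : I → X} {t₁ t₂ t₃ : I}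
    (hA' : ∀ u ∈ Icc t₂ t₃, a ≤ infDist (γ u) (γ '' Icc 0 t₁))
    (hB' : ∀ u ∈ Icc t₃ 1, a ≤ infDist (γ u) (γ '' Icc t₁ t₂)) {u : I}
    (hu : dist x (γ u) < a / 2) :
    infDistCoord (γ '' Icc 0 t₁) (γ '' Icc t₁ t₂) a x ≠ 0 := by
  intro h0
  have hre := congrArg Complex.re h0
  have him := congrArg Complex.im h0
  rw [Complex.zero_re] at hre
  rw [Complex.zero_im] at him
  rcases le_total u t₁ with h1 | h1
  · exact hre.not_lt (infDistCoord_re_neg_of_dist_lt ⟨u, ⟨nonneg', h1⟩, rfl⟩ hu)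
  rcases le_total u t₂ with h2 | h2
  · exact him.not_lt (infDistCoord_im_neg_of_dist_lt ⟨u, ⟨h1, h2⟩, rfl⟩ hu)
  rcases le_total u t₃ with h3 | h3
  · exact hre.not_gt (infDistCoord_re_pos_of_dist_lt (hA' u ⟨h2, h3⟩) hu)
  · exact him.not_gt (infDistCoord_im_pos_of_dist_lt (hB' u ⟨h3, le_one'⟩) hu)

end InfDistCoord

/-- **Four-arc non-contractibility lemma.** Let `γ` be a closed curve in a metric space `X`
subdivided by `0 ≤ t₁ ≤ t₂ ≤ t₃ ≤ 1` into four consecutive arcs `α, β, α', β'` such that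
`dist (x, x') > a` for `x ∈ α`, `x' ∈ α'`, and `dist (y, y') > a` for `y ∈ β`, `y' ∈ β'`.
Then any null-homotopy `H` of `γ` (i.e. any extension of `γ` to the disk) passes through a
point at distance at least `a/2` from the whole curve `γ`; in particular `γ` is not
contractible within its `a/2`-neighborhood. -/
theorem not_contractible_in_small_neighborhood
    {X : Type*} [MetricSpace X] (a : ℝ)
    (γ : C(unitInterval, X)) (hloop : γ 0 = γ 1)
    (t₁ t₂ t₃ : unitInterval) (h12 : t₁ ≤ t₂) (h23 : t₂ ≤ t₃)
    (hαα' : ∀ x ∈ Set.Icc (0 : unitInterval) t₁, ∀ x' ∈ Set.Icc t₂ t₃,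
      a < dist (γ x) (γ x'))
    (hββ' : ∀ y ∈ Set.Icc t₁ t₂, ∀ y' ∈ Set.Icc t₃ (1 : unitInterval),
      a < dist (γ y) (γ y'))
    (H : C(unitInterval × unitInterval, X))
    (hH₀ : ∀ s : unitInterval, H (s, 0) = γ s)
    (hHloop : ∀ t : unitInterval, H (0, t) = H (1, t))
    (x₀ : X) (hH₁ : ∀ s : unitInterval, H (s, 1) = x₀) :
    ∃ z : unitInterval × unitInterval, ∀ u : unitInterval, a / 2 ≤ dist (H z) (γ u) := by
  rcases le_or_gt a 0 with ha | ha
  · exact ⟨(0, 0), fun u ↦ (div_nonpos_of_nonpos_of_nonneg ha zero_le_two).trans dist_nonneg⟩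
  by_contra! hnear
  have hself (x : X) : dist x x < a / 2 := by simpa using ha
  set A := γ '' Icc 0 t₁
  set B := γ '' Icc t₁ t₂
  have hA' (u : I) (hu : u ∈ Icc t₂ t₃) : a ≤ infDist (γ u) A :=
    le_infDist_image ⟨0, left_mem_Icc.2 nonneg'⟩ fun x hx ↦ hαα' x hx u hu
  have hB' (u : I) (hu : u ∈ Icc t₃ 1) : a ≤ infDist (γ u) B :=
    le_infDist_image ⟨t₁, left_mem_Icc.2 h12⟩ fun y hy ↦ hββ' y hy u hu
  let f : C(I × I, ℂ) := ⟨infDistCoord A B a ∘ H, (continuous_infDistCoord A B a).comp H.2⟩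
  obtain ⟨θ, hθ, hexp, hθ_loop⟩ := Complex.exists_closed_log_of_nullhomotopy f
    (fun z ↦ (hnear z).elim fun u ↦ infDistCoord_ne_zero_of_dist_lt hA' hB')
    (fun t ↦ congrArg (infDistCoord A B a) (hHloop t))
    (fun s ↦ congrArg (infDistCoord A B a) ((hH₁ s).trans (hH₁ 0).symm))
  refine (Complex.im_lt_im_of_four_arcs hθ (c := infDistCoord A B a ∘ γ)
    (fun s ↦ by simpa [f, hH₀] using hexp s) (congrArg (infDistCoord A B a) hloop) h12 h23
    (fun s hs ↦ infDistCoord_re_neg_of_dist_lt (mem_image_of_mem γ hs) (hself _))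
    (fun s hs ↦ infDistCoord_im_neg_of_dist_lt (mem_image_of_mem γ hs) (hself _))
    (fun s hs ↦ infDistCoord_re_pos_of_dist_lt (hA' s hs) (hself _))
    (fun s hs ↦ infDistCoord_im_pos_of_dist_lt (hB' s hs) (hself _))).ne
    (congrArg Complex.im hθ_loop)
end
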